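/- Assume Ric ≤ C g on [0, τ̄] for a nonnegative constant C. Then the reduced distance satisfies l(q, τ) ≤ e^{2Cτ} d²(p, q, 0)/(4τ) + (nC/3) τ for each τ ∈ (0, τ̄]. -/

import Mathlib

open MeasureTheory Real Set Filter

noncomputable section

/-- Partial derivative in the `i`-th coordinate direction. -/
def pdv {n : ℕ} (i : Fin n) (f : (Fin n → ℝ) → ℝ) (x : Fin n → ℝ) : ℝ :=
  fderiv ℝ f x (Pi.single i 1)

/-- Christoffel symbols `Γ^k_{ij}` of a metric given in coordinates. -/
def christoffel {n : ℕ} (G : (Fin n → ℝ) → Matrix (Fin n) (Fin n) ℝ) (x : Fin n → ℝ)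
    (k i j : Fin n) : ℝ :=
  (1 / 2) * ∑ l, (G x)⁻¹ k l *
    (pdv i (fun y => G y j l) x + pdv j (fun y => G y i l) x - pdv l (fun y => G y i j) x)

/-- The Ricci curvature tensor of a metric in coordinates. -/
def ricci {n : ℕ} (G : (Fin n → ℝ) → Matrix (Fin n) (Fin n) ℝ) (x : Fin n → ℝ) :
    Matrix (Fin n) (Fin n) ℝ :=
  Matrix.of fun i j =>
    (∑ k, (pdv k (fun y => christoffel G y k i j) x - pdv i (fun y => christoffel G y k k j) x))
    + ∑ k, ∑ l, (christoffel G x k k l * christoffel G x l i j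
        - christoffel G x k i l * christoffel G x l k j)

/-- Scalar curvature. -/
def scalarCurv {n : ℕ} (G : (Fin n → ℝ) → Matrix (Fin n) (Fin n) ℝ) (x : Fin n → ℝ) : ℝ :=
  ((G x)⁻¹ * ricci G x).trace

/-- Quadratic/bilinear form of a matrix. -/
def qf {n : ℕ} (A : Matrix (Fin n) (Fin n) ℝ) (v w : Fin n → ℝ) : ℝ :=
  dotProduct v (A.mulVec w)

/-- Riemann curvature tensor `R^l_{kij}`-type components. -/
def riem {n : ℕ} (G : (Fin n → ℝ) → Matrix (Fin n) (Fin n) ℝ) (x : Fin n → ℝ)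
    (l i j k : Fin n) : ℝ :=
  pdv i (fun y => christoffel G y l j k) x - pdv j (fun y => christoffel G y l i k) x
    + ∑ m, (christoffel G x l i m * christoffel G x m j k
        - christoffel G x l j m * christoffel G x m i k)

/-- `⟨Rm(u,v)v, u⟩`. -/
def rm4 {n : ℕ} (G : (Fin n → ℝ) → Matrix (Fin n) (Fin n) ℝ) (x : Fin n → ℝ)
    (u v : Fin n → ℝ) : ℝ :=
  ∑ a, ∑ l, ∑ i, ∑ j, ∑ k, G x a l * riem G x l i j k * u i * v j * v k * u a

/-- Gradient vector field of `f` with respect to the metric `G`. -/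
def gradVec {n : ℕ} (G : (Fin n → ℝ) → Matrix (Fin n) (Fin n) ℝ) (f : (Fin n → ℝ) → ℝ)
    (x : Fin n → ℝ) (k : Fin n) : ℝ :=
  ∑ l, (G x)⁻¹ k l * pdv l f x

/-- Hessian `∇²f` with respect to the metric `G`. -/
def hessian {n : ℕ} (G : (Fin n → ℝ) → Matrix (Fin n) (Fin n) ℝ) (f : (Fin n → ℝ) → ℝ)
    (x : Fin n → ℝ) (i j : Fin n) : ℝ :=
  pdv i (fun y => pdv j f y) x - ∑ k, christoffel G x k i j * pdv k f x

/-- Laplace–Beltrami operator. -/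
def lapl {n : ℕ} (G : (Fin n → ℝ) → Matrix (Fin n) (Fin n) ℝ) (f : (Fin n → ℝ) → ℝ)
    (x : Fin n → ℝ) : ℝ :=
  ∑ i, ∑ j, (G x)⁻¹ i j * hessian G f x i j

/-- `|∇f|²` with respect to the metric `G`. -/
def gradSq {n : ℕ} (G : (Fin n → ℝ) → Matrix (Fin n) (Fin n) ℝ) (f : (Fin n → ℝ) → ℝ)
    (x : Fin n → ℝ) : ℝ :=
  ∑ i, ∑ j, (G x)⁻¹ i j * pdv i f x * pdv j f x

/-- The backward Ricci flow equation `∂g/∂τ = 2 Ric` on a set of times. -/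
def IsBackwardRicciFlow {n : ℕ} (G : ℝ → (Fin n → ℝ) → Matrix (Fin n) (Fin n) ℝ)
    (S : Set ℝ) : Prop :=
  ∀ s ∈ S, ∀ x i j, HasDerivAt (fun u => G u x i j) (2 * ricci (G s) x i j) s

/-- Smoothness, symmetry and positivity of the family of metrics. -/
def SmoothFlow {n : ℕ} (G : ℝ → (Fin n → ℝ) → Matrix (Fin n) (Fin n) ℝ) (S : Set ℝ) : Prop :=
  (∀ i j, ContDiffOn ℝ (⊤ : ℕ∞) (fun z : ℝ × (Fin n → ℝ) => G z.1 z.2 i j) (S ×ˢ univ)) ∧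
    ∀ s ∈ S, ∀ x, (G s x).PosDef ∧ (G s x).IsSymm

/-- Perelman's `L`-energy of a curve. -/
def Lenergy {n : ℕ} (G : ℝ → (Fin n → ℝ) → Matrix (Fin n) (Fin n) ℝ)
    (γ : ℝ → Fin n → ℝ) (τ : ℝ) : ℝ :=
  ∫ s in (0:ℝ)..τ,
    Real.sqrt s * (scalarCurv (G s) (γ s) + qf (G s (γ s)) (deriv γ s) (deriv γ s))

/-- `L(q,τ)`: infimum of the `L`-energy over curves from `p` to `q`. -/
def Ldist {n : ℕ} (G : ℝ → (Fin n → ℝ) → Matrix (Fin n) (Fin n) ℝ)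
    (p q : Fin n → ℝ) (τ : ℝ) : ℝ :=
  sInf {E | ∃ γ : ℝ → Fin n → ℝ,
    ContDiffOn ℝ 1 γ (Icc 0 τ) ∧ γ 0 = p ∧ γ τ = q ∧ E = Lenergy G γ τ}

/-- Perelman's reduced distance `l(q,τ)`. -/
def redDist {n : ℕ} (G : ℝ → (Fin n → ℝ) → Matrix (Fin n) (Fin n) ℝ)
    (p q : Fin n → ℝ) (τ : ℝ) : ℝ :=
  Ldist G p q τ / (2 * Real.sqrt τ)

/-- Riemannian distance of a metric given in coordinates. -/
def gdist {n : ℕ} (G : (Fin n → ℝ) → Matrix (Fin n) (Fin n) ℝ) (p q : Fin n → ℝ) : ℝ :=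
  sInf {L | ∃ γ : ℝ → Fin n → ℝ, ContDiffOn ℝ 1 γ (Icc 0 1) ∧ γ 0 = p ∧ γ 1 = q ∧
    L = ∫ t in (0:ℝ)..1, Real.sqrt (qf (G (γ t)) (deriv γ t) (deriv γ t))}

/-- Perelman's reduced volume. -/
def reducedVolume {n : ℕ} (G : ℝ → (Fin n → ℝ) → Matrix (Fin n) (Fin n) ℝ)
    (p : Fin n → ℝ) (τ : ℝ) : ℝ :=
  ∫ x : Fin n → ℝ,
    τ ^ (-(n : ℝ) / 2) * Real.exp (-(redDist G p x τ)) * Real.sqrt ((G τ x).det)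

/-! ### Auxiliary lemmas -/

open scoped Matrix

lemma myTrace_nonneg {m : ℕ} {M : Matrix (Fin m) (Fin m) ℝ} (h : M.PosSemidef) :
    0 ≤ M.trace := by
  rw [Matrix.trace]
  apply Finset.sum_nonneg
  intro i _
  have := h.dotProduct_mulVec_nonneg (Pi.single i 1)
  simpa [dotProduct, Matrix.mulVec, Pi.single_apply, Matrix.diag,
    Finset.mul_sum, Finset.sum_ite_eq, Finset.sum_ite_eq'] using this

lemma myTrace_mul_nonneg {m : ℕ} {B S : Matrix (Fin m) (Fin m) ℝ}
    (hB : B.PosSemidef) (hS : S.PosSemidef) : 0 ≤ (B * S).trace := by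
  classical
  open scoped MatrixOrder in
  obtain ⟨X, rfl⟩ := CStarAlgebra.nonneg_iff_eq_star_mul_self.mp hS.nonneg
  rw [← Matrix.mul_assoc, Matrix.trace_mul_cycle]
  exact myTrace_nonneg (hB.mul_mul_conjTranspose_same X)

lemma dot_transpose {m : ℕ} (A : Matrix (Fin m) (Fin m) ℝ) (v : Fin m → ℝ) :
    v ⬝ᵥ Aᵀ *ᵥ v = v ⬝ᵥ A *ᵥ v := by
  simp only [dotProduct, Matrix.mulVec, Matrix.transpose_apply, Finset.mul_sum]
  rw [Finset.sum_comm]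
  congr 1; ext i; congr 1; ext j; ring

lemma myTrace_key {m : ℕ} {g A : Matrix (Fin m) (Fin m) ℝ} {C : ℝ}
    (hg : g.PosDef) (hA : ∀ v, v ⬝ᵥ A *ᵥ v ≤ C * (v ⬝ᵥ g *ᵥ v)) :
    (g⁻¹ * A).trace ≤ m * C := by
  have hgsym : gᵀ = g := hg.isHermitian.eq
  set S : Matrix (Fin m) (Fin m) ℝ := C • g - (1/2 : ℝ) • (A + Aᵀ) with hSdef
  have hSsym : S.IsHermitian := by
    unfold Matrix.IsHermitian
    ext i j
    simp only [hSdef, Matrix.conjTranspose_apply, Matrix.sub_apply, Matrix.smul_apply,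
      Matrix.add_apply, Matrix.transpose_apply, star_trivial, smul_eq_mul]
    have := congrFun (congrFun hg.isHermitian.eq i) j
    simp only [Matrix.conjTranspose_apply, star_trivial] at this
    rw [this]; ring
  have hSpos : S.PosSemidef := by
    refine Matrix.PosSemidef.of_dotProduct_mulVec_nonneg hSsym fun v => ?_
    have h1 : v ⬝ᵥ S *ᵥ v = C * (v ⬝ᵥ g *ᵥ v) - v ⬝ᵥ A *ᵥ v := by
      simp only [hSdef, Matrix.sub_mulVec, Matrix.smul_mulVec, Matrix.add_mulVec,
        dotProduct_sub, dotProduct_smul, dotProduct_add, smul_eq_mul,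
        dot_transpose]
      ring
    simp only [star_trivial, h1]
    linarith [hA v]
  have hginv : g⁻¹.PosDef := hg.inv
  have htr : (g⁻¹ * S).trace = C * m - (g⁻¹ * A).trace := by
    have hAt : (g⁻¹ * Aᵀ).trace = (g⁻¹ * A).trace := by
      rw [← Matrix.trace_transpose (g⁻¹ * Aᵀ), Matrix.transpose_mul, Matrix.transpose_transpose,
        Matrix.transpose_nonsing_inv, hgsym, Matrix.trace_mul_comm]
    have hone : (g⁻¹ * g) = 1 := Matrix.nonsing_inv_mul g hg.det_pos.ne'.isUnit
    rw [hSdef, Matrix.mul_sub, Matrix.mul_smul, Matrix.mul_smul, Matrix.mul_add, hone,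
      Matrix.trace_sub, Matrix.trace_smul, Matrix.trace_smul, Matrix.trace_add, hAt,
      Matrix.trace_one]
    simp only [smul_eq_mul, Fintype.card_fin]
    ring
  have h0 : 0 ≤ (g⁻¹ * S).trace := myTrace_mul_nonneg hginv.posSemidef hSpos
  rw [htr] at h0
  linarith

lemma qf_sum {m : ℕ} (M : Matrix (Fin m) (Fin m) ℝ) (v w : Fin m → ℝ) :
    qf M v w = ∑ i, ∑ j, v i * M i j * w j := by
  simp [qf, dotProduct, Matrix.mulVec, Finset.mul_sum, mul_assoc]

lemma qf_nonneg' {m : ℕ} {M : Matrix (Fin m) (Fin m) ℝ} (h : M.PosDef) (v : Fin m → ℝ) :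
    0 ≤ qf M v v := by
  have := h.posSemidef.dotProduct_mulVec_nonneg v
  simpa [qf] using this

lemma qf_smul {m : ℕ} (M : Matrix (Fin m) (Fin m) ℝ) (a : ℝ) (v : Fin m → ℝ) :
    qf M (a • v) (a • v) = a^2 * qf M v v := by
  simp only [qf_sum]
  rw [Finset.mul_sum]; congr 1; ext i; rw [Finset.mul_sum]; congr 1; ext j
  simp only [Pi.smul_apply, smul_eq_mul]; ring

lemma metric_comp {n : ℕ} {G RIC : ℝ → (Fin n → ℝ) → Matrix (Fin n) (Fin n) ℝ} {τb C : ℝ}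
    (hflow : ∀ s ∈ Icc (0:ℝ) τb, ∀ x i j, HasDerivAt (fun u => G u x i j)
      (2 * RIC s x i j) s)
    (hRic : ∀ s ∈ Icc (0:ℝ) τb, ∀ x v, qf (RIC s x) v v ≤ C * qf (G s x) v v) :
    ∀ s ∈ Icc (0:ℝ) τb, ∀ x v, qf (G s x) v v ≤ Real.exp (2*C*s) * qf (G 0 x) v v := by
  intro s hs x v
  have h0b : (0:ℝ) ∈ Icc (0:ℝ) τb := ⟨le_rfl, hs.1.trans hs.2⟩
  have hf : ∀ u ∈ Icc (0:ℝ) τb,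
      HasDerivAt (fun r => qf (G r x) v v) (2 * qf (RIC u x) v v) u := by
    intro u hu
    have h1 : HasDerivAt (fun r => ∑ i, ∑ j, v i * G r x i j * v j)
        (∑ i, ∑ j, v i * (2 * RIC u x i j) * v j) u := by
      apply HasDerivAt.fun_sum
      intro i _
      apply HasDerivAt.fun_sum
      intro j _
      exact ((hflow u hu x i j).const_mul (v i)).mul_const (v j)
    have h2 : (fun r => ∑ i, ∑ j, v i * G r x i j * v j) = fun r => qf (G r x) v v := by
      funext r; rw [qf_sum]
    rw [h2] at h1
    convert h1 using 1
    rw [qf_sum, Finset.mul_sum]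
    congr 1; ext i; rw [Finset.mul_sum]; congr 1; ext j; ring
  set F : ℝ → ℝ := fun u => Real.exp (-(2*C)*u) * qf (G u x) v v with hFdef
  have hF' : ∀ u ∈ Icc (0:ℝ) τb, HasDerivAt F
      ((-(2*C)) * Real.exp (-(2*C)*u) * qf (G u x) v v
        + Real.exp (-(2*C)*u) * (2 * qf (RIC u x) v v)) u := by
    intro u hu
    have he : HasDerivAt (fun r => Real.exp (-(2*C)*r)) (-(2*C) * Real.exp (-(2*C)*u)) u := by
      have := ((hasDerivAt_id u).const_mul (-(2*C))).exp
      simpa [mul_comm] using this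
    exact he.mul (hf u hu)
  have hanti : AntitoneOn F (Icc 0 τb) := by
    apply antitoneOn_of_deriv_nonpos (convex_Icc 0 τb)
    · intro u hu
      exact (hF' u hu).differentiableAt.continuousAt.continuousWithinAt
    · intro u hu
      rw [interior_Icc] at hu
      exact ((hF' u (Ioo_subset_Icc_self hu)).differentiableAt.differentiableWithinAt)
    · intro u hu
      rw [interior_Icc] at hu
      have hu' : u ∈ Icc (0:ℝ) τb := Ioo_subset_Icc_self hu
      rw [(hF' u hu').deriv]
      have h3 := hRic u hu' x v
      have h4 : (0:ℝ) < Real.exp (-(2*C)*u) := Real.exp_pos _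
      nlinarith
  have hFs := hanti h0b hs hs.1
  have h5 : Real.exp (-(2*C)*s) * qf (G s x) v v ≤ qf (G 0 x) v v := by
    simpa [hFdef] using hFs
  have h6 : (0:ℝ) < Real.exp (2*C*s) := Real.exp_pos _
  have h7 : Real.exp (2*C*s) * Real.exp (-(2*C)*s) = 1 := by
    rw [← Real.exp_add]; ring_nf; exact Real.exp_zero
  calc qf (G s x) v v = Real.exp (2*C*s) * (Real.exp (-(2*C)*s) * qf (G s x) v v) := by
        rw [← mul_assoc, h7, one_mul]
    _ ≤ Real.exp (2*C*s) * qf (G 0 x) v v := mul_le_mul_of_nonneg_left h5 h6.le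

lemma ftc {f : ℝ → ℝ} (hf : Continuous f) (t : ℝ) :
    HasDerivAt (fun u => ∫ x in (0:ℝ)..u, f x) (f t) t :=
  intervalIntegral.integral_hasDerivAt_right (hf.intervalIntegrable _ _)
    (hf.stronglyMeasurableAtFilter _ _) hf.continuousAt
set_option maxHeartbeats 2000000 in
/-- if `Ric ≤ C g` on `[0, τ̄]` with `C ≥ 0`, then
`l(q,τ) ≤ e^{2Cτ} d²(p,q,0)/(4τ) + (nC/3) τ` for `τ ∈ (0, τ̄]`. -/
theorem redDist_upper_bound_of_Ricci_upper_bound {n : ℕ}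
    (G : ℝ → (Fin n → ℝ) → Matrix (Fin n) (Fin n) ℝ) (τb C : ℝ)
    (hτb : 0 < τb) (hC : 0 ≤ C)
    (hsmooth : SmoothFlow G (Icc 0 τb))
    (hflow : IsBackwardRicciFlow G (Icc 0 τb))
    (hRic : ∀ s ∈ Icc (0:ℝ) τb, ∀ (x v : Fin n → ℝ),
      qf (ricci (G s) x) v v ≤ C * qf (G s x) v v)
    (p : Fin n → ℝ) :
    ∀ τ ∈ Ioc (0:ℝ) τb, ∀ q : Fin n → ℝ,
      redDist G p q τ ≤
        Real.exp (2 * C * τ) * (gdist (G 0) p q) ^ 2 / (4 * τ) + (n * C / 3) * τ := by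
  intro τ hτ q
  obtain ⟨hτ0, hττb⟩ := hτ
  have hsqτ : 0 < Real.sqrt τ := Real.sqrt_pos.2 hτ0
  have hscal : ∀ s ∈ Icc (0:ℝ) τb, ∀ x, scalarCurv (G s) x ≤ n * C := by
    intro s hs x
    have hpd := (hsmooth.2 s hs x).1
    have key := myTrace_key hpd (fun v => by simpa [qf] using hRic s hs x v)
    simpa [scalarCurv] using key
  have hcomp : ∀ s ∈ Icc (0:ℝ) τb, ∀ x v, qf (G s x) v v ≤ Real.exp (2*C*s) * qf (G 0 x) v v :=
    metric_comp (RIC := fun u => ricci (G u)) hflow hRic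
  set d := gdist (G 0) p q with hd
  set SD := {L | ∃ γ : ℝ → Fin n → ℝ, ContDiffOn ℝ 1 γ (Icc 0 1) ∧ γ 0 = p ∧ γ 1 = q ∧
    L = ∫ t in (0:ℝ)..1, Real.sqrt (qf (G 0 (γ t)) (deriv γ t) (deriv γ t))} with hSD
  have hdSD : d = sInf SD := rfl
  have hSDne : SD.Nonempty := by
    refine ⟨_, fun t : ℝ => p + t • (q - p), ?_, by simp, by simp, rfl⟩
    exact (contDiff_const.add (contDiff_id.smul contDiff_const)).contDiffOn
  have hd0 : 0 ≤ d := by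
    rw [hdSD]
    apply Real.sInf_nonneg
    rintro x ⟨γ, _, _, _, rfl⟩
    apply intervalIntegral.integral_nonneg zero_le_one
    intro t _
    exact Real.sqrt_nonneg _
  set T1 : ℝ := (n*C) * ((2/3) * τ * Real.sqrt τ) with hT1
  set Fq : ℝ → ℝ := fun ε => Real.exp (2*C*τ) * (d+2*ε)^2
      / (4*(Real.sqrt (τ+ε) - Real.sqrt ε)^2) * (2*Real.sqrt τ) with hFq
  have hT1nn : 0 ≤ T1 := by positivity
  have key : ∀ ε, 0 < ε → Ldist G p q τ ≤ T1 + Fq ε := by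
    intro ε hε
    -- Step 1: a curve from p to q of g(0)-length < d + ε
    have hlt : sInf SD < d + ε := by rw [← hdSD]; linarith only [hε]
    obtain ⟨L0, hL0mem, hL0lt⟩ := exists_lt_of_csInf_lt hSDne hlt
    obtain ⟨σ, hσ, hσ0, hσ1, hL0⟩ := hL0mem
    set σ' : ℝ → Fin n → ℝ := derivWithin σ (Icc (0:ℝ) 1) with hσ'def
    set hfun : ℝ → ℝ := fun t => Real.sqrt (qf (G 0 (σ t)) (σ' t) (σ' t)) with hhfun
    have hG0cont : ∀ i j, Continuous (fun x : Fin n → ℝ => G 0 x i j) := by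
      intro i j
      have h1 := (hsmooth.1 i j).continuousOn
      have h2 : Continuous (fun x : Fin n → ℝ => ((0:ℝ), x)) := by continuity
      have h3 : ContinuousOn (fun x : Fin n → ℝ => G 0 x i j) univ :=
        h1.comp h2.continuousOn (fun x _ => ⟨⟨le_rfl, hτb.le⟩, mem_univ x⟩)
      rw [← continuousOn_univ]
      exact h3
    have hσcont : ContinuousOn σ (Icc 0 1) := hσ.continuousOn
    have hσ'cont : ContinuousOn σ' (Icc 0 1) :=
      hσ.continuousOn_derivWithin (uniqueDiffOn_Icc one_pos) le_rfl
    have hqfcont : ContinuousOn (fun t => qf (G 0 (σ t)) (σ' t) (σ' t)) (Icc 0 1) := by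
      have hrw : (fun t => qf ((G 0) (σ t)) (σ' t) (σ' t))
          = fun t => ∑ i, ∑ j, σ' t i * G 0 (σ t) i j * σ' t j := by
        funext t; rw [qf_sum]
      rw [hrw]
      apply continuousOn_finset_sum _ (fun i _ => ?_)
      apply continuousOn_finset_sum _ (fun j _ => ?_)
      exact (((continuous_apply i).comp_continuousOn hσ'cont).mul
        ((hG0cont i j).comp_continuousOn hσcont)).mul
        ((continuous_apply j).comp_continuousOn hσ'cont)
    have hhcont : ContinuousOn hfun (Icc 0 1) := Real.continuous_sqrt.comp_continuousOn hqfcont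
    -- clamped speed function
    set cl : ℝ → ℝ := fun t => max 0 (min 1 t) with hcl
    have hclcont : Continuous cl := continuous_const.max (continuous_const.min continuous_id)
    have hclmem : ∀ t, cl t ∈ Icc (0:ℝ) 1 := fun t =>
      ⟨le_max_left _ _, max_le (by norm_num) (min_le_left _ _)⟩
    have hclid : ∀ t ∈ Icc (0:ℝ) 1, cl t = t := by
      intro t ht; rw [hcl]; simp only; rw [min_eq_right ht.2, max_eq_right ht.1]
    set e : ℝ → ℝ := fun t => hfun (cl t) with hedef
    have hecont : Continuous e := hhcont.comp_continuous hclcont hclmem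
    have he0 : ∀ t, 0 ≤ e t := fun t => Real.sqrt_nonneg _
    have heid : ∀ t ∈ Icc (0:ℝ) 1, e t = hfun t := fun t ht => by
      rw [hedef]; simp only; rw [hclid t ht]
    -- the primitive Ψ and its inverse φ
    set Ψ : ℝ → ℝ := fun t => ∫ u in (0:ℝ)..t, (e u + ε) with hΨdef
    have heε : Continuous (fun u => e u + ε) := hecont.add continuous_const
    have hΨd : ∀ t, HasDerivAt Ψ (e t + ε) t := fun t => ftc heε t
    have hΨ0 : Ψ 0 = 0 := intervalIntegral.integral_same
    have hlow : ∀ a b : ℝ, a ≤ b → ε * (b - a) ≤ Ψ b - Ψ a := by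
      intro a b hab
      have h1 : Ψ a + ∫ u in a..b, (e u + ε) = Ψ b :=
        intervalIntegral.integral_add_adjacent_intervals
          (heε.intervalIntegrable 0 a) (heε.intervalIntegrable a b)
      have h3 : ∫ u in a..b, (ε:ℝ) ≤ ∫ u in a..b, (e u + ε) :=
        intervalIntegral.integral_mono_on hab intervalIntegrable_const
          (heε.intervalIntegrable a b) (fun u _ => by linarith [he0 u])
      rw [intervalIntegral.integral_const, smul_eq_mul] at h3
      linarith only [h1, h3]
    have hΨmono : StrictMono Ψ := fun a b hab => by
      have h1 := hlow a b hab.le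
      have h2 : 0 < ε * (b - a) := mul_pos hε (by linarith only [hab])
      linarith only [h1, h2]
    have hΨcont : Continuous Ψ :=
      Differentiable.continuous (fun t => (hΨd t).differentiableAt)
    have hΨsurj : Function.Surjective Ψ := by
      apply hΨcont.surjective
      · apply tendsto_atTop_mono' atTop (f₁ := fun t => ε * t + Ψ 0)
          (Filter.eventually_atTop.2 ⟨0, fun t ht => by
            have h5 := hlow 0 t ht
            rw [sub_zero] at h5
            show ε * t + Ψ 0 ≤ Ψ t
            linarith only [h5]⟩)
        exact (tendsto_id.const_mul_atTop hε).atTop_add tendsto_const_nhds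
      · apply tendsto_atBot_mono' atBot (f₁ := fun t => ε * t + Ψ 0)
          (Filter.eventually_atBot.2 ⟨0, fun t ht => by
            have h5 := hlow t 0 ht
            rw [zero_sub] at h5
            have h6 : ε * (0 - t) = - (ε * t) := by ring
            show Ψ t ≤ ε * t + Ψ 0
            linarith only [h5, h6]⟩)
        exact (tendsto_id.const_mul_atBot hε).atBot_add tendsto_const_nhds
    set Φ : ℝ ≃o ℝ := StrictMono.orderIsoOfSurjective Ψ hΨmono hΨsurj with hΦdef
    set φ : ℝ → ℝ := fun y => Φ.symm y with hφdef
    have hφΨ : ∀ t, φ (Ψ t) = t := fun t => Φ.symm_apply_apply t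
    have hΨφ : ∀ y, Ψ (φ y) = y := fun y => Φ.apply_symm_apply y
    have hφcont : Continuous φ := (OrderIso.continuous Φ.symm)
    have hφmono : StrictMono φ := Φ.symm.strictMono
    have hφ0 : φ 0 = 0 := by
      have := hφΨ 0
      rwa [hΨ0] at this
    set N : ℝ := Ψ 1 with hNdef
    have hφN : φ N = 1 := hφΨ 1
    have hN0 : 0 < N := by
      have h5 := hlow 0 1 zero_le_one
      rw [hΨ0] at h5
      simp only [hNdef]
      linarith only [h5, hε]
    -- N < d + 2ε
    have hΨ1 : N = (∫ u in (0:ℝ)..1, e u) + ε := by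
      have h4 : Ψ 1 = (∫ u in (0:ℝ)..1, e u) + ∫ u in (0:ℝ)..1, (ε:ℝ) := by
        rw [hΨdef]
        exact intervalIntegral.integral_add (hecont.intervalIntegrable 0 1)
          intervalIntegrable_const
      rw [hNdef, h4, intervalIntegral.integral_const]
      simp
    have hIe : (∫ u in (0:ℝ)..1, e u) = ∫ u in (0:ℝ)..1, hfun u :=
      intervalIntegral.integral_congr (fun t ht =>
        heid t (by rwa [uIcc_of_le zero_le_one] at ht))
    have hIh : (∫ u in (0:ℝ)..1, hfun u) = L0 := by
      rw [hL0]
      apply intervalIntegral.integral_congr_ae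
      have hne1 : ∀ᵐ t : ℝ, t ≠ (1:ℝ) := by
        rw [ae_iff]
        have hset : {t : ℝ | ¬ t ≠ 1} = {1} := by ext t; simp
        rw [hset]
        exact Real.volume_singleton
      filter_upwards [hne1] with t ht htmem
      rw [uIoc_of_le zero_le_one] at htmem
      have htI : t ∈ Ioo (0:ℝ) 1 := ⟨htmem.1, lt_of_le_of_ne htmem.2 ht⟩
      rw [hhfun]
      simp only
      rw [hσ'def, derivWithin_of_mem_nhds (Icc_mem_nhds htI.1 htI.2)]
    have hNd : N < d + 2*ε := by rw [hΨ1, hIe, hIh]; linarith only [hL0lt]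
    -- derivative of φ
    have hφdiff : ∀ y, HasDerivAt φ (e (φ y) + ε)⁻¹ y := by
      intro y
      have h1 : (0:ℝ) < e (φ y) + ε := by linarith only [he0 (φ y), hε]
      exact HasDerivAt.of_local_left_inverse hφcont.continuousAt (hΨd (φ y)) h1.ne'
        (Filter.Eventually.of_forall hΨφ)
    have hφC1 : ContDiff ℝ 1 φ := by
      rw [contDiff_one_iff_deriv]
      refine ⟨fun y => (hφdiff y).differentiableAt, ?_⟩
      have hdd : deriv φ = fun y => (e (φ y) + ε)⁻¹ := funext fun y => (hφdiff y).deriv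
      rw [hdd]
      exact ((hecont.comp hφcont).add continuous_const).inv₀
        (fun y => by have := he0 (φ y); exact (by linarith : (0:ℝ) < e (φ y) + ε).ne')
    -- the time change c
    set K : ℝ := Real.sqrt (τ+ε) - Real.sqrt ε with hKdef
    have hKpos : 0 < K := sub_pos.2 (Real.sqrt_lt_sqrt hε.le (by linarith))
    set c : ℝ → ℝ := fun s => (N/K) * (Real.sqrt (s+ε) - Real.sqrt ε) with hcdef
    have hc0 : c 0 = 0 := by rw [hcdef]; simp
    have hcτ : c τ = N := by
      rw [hcdef]
      simp only
      rw [← hKdef, div_mul_cancel₀ _ hKpos.ne']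
    have hcd : ∀ s, 0 < s + ε → HasDerivAt c (N/K * (1/(2*Real.sqrt (s+ε)))) s := by
      intro s hsε
      have h1 : HasDerivAt (fun u : ℝ => u + ε) 1 s := (hasDerivAt_id s).add_const ε
      have h2 : HasDerivAt (fun u => Real.sqrt (u+ε)) (1/(2*Real.sqrt (s+ε))) s := by
        have := (Real.hasDerivAt_sqrt hsε.ne').comp s h1
        exact this.congr_deriv (by ring)
      have h3 := (h2.sub_const (Real.sqrt ε)).const_mul (N/K)
      simpa using h3
    have hNK : 0 < N/K := div_pos hN0 hKpos
    have hcmono : ∀ s ∈ Icc (0:ℝ) τ, c s ∈ Icc 0 N := by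
      intro s hs
      constructor
      · apply mul_nonneg hNK.le
        have h5 := Real.sqrt_le_sqrt (show ε ≤ s + ε by linarith only [hs.1])
        linarith only [h5]
      · rw [← hcτ, hcdef]
        simp only
        apply mul_le_mul_of_nonneg_left _ hNK.le
        have h5 := Real.sqrt_le_sqrt (show s + ε ≤ τ + ε by linarith only [hs.2])
        linarith only [h5]
    have hcint : ∀ s ∈ Ioo (0:ℝ) τ, c s ∈ Ioo 0 N := by
      intro s hs
      constructor
      · apply mul_pos hNK
        have h5 := Real.sqrt_lt_sqrt hε.le (show ε < s + ε by linarith only [hs.1])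
        linarith only [h5]
      · rw [← hcτ, hcdef]
        simp only
        apply mul_lt_mul_of_pos_left _ hNK
        have h5 := Real.sqrt_lt_sqrt (by linarith only [hs.1, hε] : (0:ℝ) ≤ s + ε)
          (show s + ε < τ + ε by linarith only [hs.2])
        linarith only [h5]
    have hcC1 : ContDiffOn ℝ 1 c (Icc 0 τ) := by
      intro s hs
      have hsε : 0 < s + ε := by have h5 := hs.1; linarith only [h5, hε]
      have h2 : ContDiffAt ℝ 1 (fun u : ℝ => u + ε) s := (contDiff_id.add contDiff_const).contDiffAt
      have h1 : ContDiffAt ℝ 1 (fun u : ℝ => Real.sqrt (u + ε)) s :=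
        (Real.contDiffAt_sqrt hsε.ne').comp s h2
      exact (contDiffAt_const.mul (h1.sub contDiffAt_const)).contDiffWithinAt
    -- the comparison curve γ
    set γ : ℝ → Fin n → ℝ := fun s => σ (φ (c s)) with hγdef
    have hmapsφc : MapsTo (φ ∘ c) (Icc 0 τ) (Icc 0 1) := by
      intro s hs
      have h1 := hcmono s hs
      constructor
      · rw [← hφ0]; exact hφmono.monotone h1.1
      · rw [← hφN]; exact hφmono.monotone h1.2
    have hγC1 : ContDiffOn ℝ 1 γ (Icc 0 τ) := hσ.comp (hφC1.comp_contDiffOn hcC1) hmapsφc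
    have hγ0 : γ 0 = p := by rw [hγdef]; simp only; rw [hc0, hφ0, hσ0]
    have hγτ : γ τ = q := by rw [hγdef]; simp only; rw [hcτ, hφN, hσ1]
    -- energy estimate
    set A : ℝ := Real.exp (2*C*τ) * N^2 / (4*K^2) with hAdef
    have hAnn : 0 ≤ A := by positivity
    have hbound0 : Lenergy G γ τ ≤ T1 + A * (2*Real.sqrt τ) := by
      by_cases hInt : IntervalIntegrable (fun s => Real.sqrt s *
          (scalarCurv (G s) (γ s) + qf (G s (γ s)) (deriv γ s) (deriv γ s))) volume 0 τ
      case neg =>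
        unfold Lenergy
        rw [intervalIntegral.integral_undef hInt]
        positivity
      case pos =>
        set Maj : ℝ → ℝ := fun s => (n*C) * s ^ ((1:ℝ)/2) + A * s ^ (-(1:ℝ)/2) with hMajdef
        have hMajInt : IntervalIntegrable Maj volume 0 τ :=
          ((intervalIntegral.intervalIntegrable_rpow' (by norm_num)).const_mul _).add
            ((intervalIntegral.intervalIntegrable_rpow' (by norm_num)).const_mul _)
        have hptwise : ∀ s ∈ Ioo (0:ℝ) τ, Real.sqrt s *
            (scalarCurv (G s) (γ s) + qf (G s (γ s)) (deriv γ s) (deriv γ s)) ≤ Maj s := by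
          intro s hs
          have hs0 : 0 < s := hs.1
          have hsτ : s < τ := hs.2
          have hsε : 0 < s + ε := add_pos hs0 hε
          have hsIcc : s ∈ Icc (0:ℝ) τb := ⟨hs0.le, by linarith only [hsτ, hττb]⟩
          set t : ℝ := φ (c s) with htdef
          have hcs := hcint s hs
          have hws : t ∈ Ioo (0:ℝ) 1 := by
            constructor
            · rw [htdef, ← hφ0]; exact hφmono hcs.1
            · rw [htdef, ← hφN]; exact hφmono hcs.2
          have hnhds : Icc (0:ℝ) 1 ∈ nhds t := Icc_mem_nhds hws.1 hws.2
          set X : ℝ := N/K * (1/(2*Real.sqrt (s+ε))) with hXdef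
          have hXnn : 0 ≤ X := by positivity
          have hwd : HasDerivAt (fun u => φ (c u)) ((e t + ε)⁻¹ * X) s := by
            have h4 := (hφdiff (c s)).comp s (hcd s hsε)
            exact h4
          have hσd : HasDerivAt σ (deriv σ t) t :=
            (((hσ.differentiableOn one_ne_zero) t (Ioo_subset_Icc_self hws)).differentiableAt
              hnhds).hasDerivAt
          have hγd : HasDerivAt γ (((e t + ε)⁻¹ * X) • deriv σ t) s := hσd.scomp s hwd
          have hdγ : deriv γ s = ((e t + ε)⁻¹ * X) • deriv σ t := hγd.deriv
          have hγs : γ s = σ t := rfl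
          have het : e t = Real.sqrt (qf (G 0 (σ t)) (deriv σ t) (deriv σ t)) := by
            rw [heid t (Ioo_subset_Icc_self hws), hhfun]
            simp only
            rw [hσ'def, derivWithin_of_mem_nhds hnhds]
          have hqf0nn : 0 ≤ qf (G 0 (σ t)) (deriv σ t) (deriv σ t) :=
            qf_nonneg' (hsmooth.2 0 ⟨le_rfl, hτb.le⟩ (σ t)).1 _
          have het2 : e t ^ 2 = qf (G 0 (σ t)) (deriv σ t) (deriv σ t) := by
            rw [het]; exact Real.sq_sqrt hqf0nn
          have hq0 : qf (G 0 (γ s)) (deriv γ s) (deriv γ s) ≤ X^2 := by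
            rw [hγs, hdγ, qf_smul, ← het2]
            have h8 : (0:ℝ) < e t + ε := by linarith only [he0 t, hε]
            have h9 : e t * (e t + ε)⁻¹ ≤ 1 := by
              rw [← div_eq_mul_inv]
              exact div_le_one_of_le₀ (by linarith only [hε]) h8.le
            have h10 : (0:ℝ) ≤ e t * (e t + ε)⁻¹ := by
              have := he0 t
              positivity
            have h11 : (e t * (e t + ε)⁻¹)^2 ≤ 1 := pow_le_one₀ h10 h9
            calc ((e t + ε)⁻¹ * X)^2 * e t^2 = (e t * (e t + ε)⁻¹)^2 * X^2 := by ring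
              _ ≤ 1 * X^2 := mul_le_mul_of_nonneg_right h11 (sq_nonneg X)
              _ = X^2 := one_mul _
          have hq1 : qf (G s (γ s)) (deriv γ s) (deriv γ s) ≤ Real.exp (2*C*s) * X^2 := by
            have h12 := hcomp s hsIcc (γ s) (deriv γ s)
            have h13 : Real.exp (2*C*s) * qf (G 0 (γ s)) (deriv γ s) (deriv γ s)
                ≤ Real.exp (2*C*s) * X^2 :=
              mul_le_mul_of_nonneg_left hq0 (Real.exp_pos _).le
            linarith only [h12, h13]
          have hsc := hscal s hsIcc (γ s)
          have hX2 : X^2 = N^2/(4*K^2) * (1/(s+ε)) := by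
            have h6 : K ≠ 0 := hKpos.ne'
            have h7 : s + ε ≠ 0 := hsε.ne'
            rw [hXdef, mul_pow, div_pow, div_pow, one_pow, mul_pow, Real.sq_sqrt hsε.le]
            field_simp
            ring
          have hsqs : Real.sqrt s = s ^ ((1:ℝ)/2) := Real.sqrt_eq_rpow s
          have hrpowneg : s ^ (-(1:ℝ)/2) = Real.sqrt s / s := by
            rw [show -(1:ℝ)/2 = (1:ℝ)/2 - 1 by norm_num, Real.rpow_sub hs0, Real.rpow_one, ← hsqs]
          have hfrac : Real.sqrt s * (1/(s+ε)) ≤ s ^ (-(1:ℝ)/2) := by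
            rw [hrpowneg]
            rw [mul_one_div]
            gcongr
            linarith only [hε]
          have hexp : Real.exp (2*C*s) ≤ Real.exp (2*C*τ) := by
            apply Real.exp_le_exp.2
            exact mul_le_mul_of_nonneg_left hsτ.le (by positivity : (0:ℝ) ≤ 2*C)
          have hterm2 : Real.sqrt s * (Real.exp (2*C*s) * X^2) ≤ A * s ^ (-(1:ℝ)/2) := by
            rw [hX2, hAdef]
            calc Real.sqrt s * (Real.exp (2*C*s) * (N^2/(4*K^2) * (1/(s+ε))))
                = Real.exp (2*C*s) * (N^2/(4*K^2)) * (Real.sqrt s * (1/(s+ε))) := by ring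
              _ ≤ Real.exp (2*C*τ) * (N^2/(4*K^2)) * (s ^ (-(1:ℝ)/2)) := by
                  have hf1 : (0:ℝ) ≤ N^2/(4*K^2) := by positivity
                  have hf2 : (0:ℝ) ≤ Real.sqrt s * (1/(s+ε)) := by positivity
                  apply mul_le_mul (mul_le_mul_of_nonneg_right hexp hf1) hfrac hf2
                  positivity
              _ = Real.exp (2*C*τ) * N^2 / (4*K^2) * (s ^ (-(1:ℝ)/2)) := by ring
          have hterm1 : Real.sqrt s * (scalarCurv (G s) (γ s)) ≤ (n*C) * s ^ ((1:ℝ)/2) := by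
            rw [← hsqs, mul_comm ((n:ℝ)*C) (Real.sqrt s)]
            exact mul_le_mul_of_nonneg_left hsc (Real.sqrt_nonneg s)
          have hsplit : Real.sqrt s * (scalarCurv (G s) (γ s)
              + qf (G s (γ s)) (deriv γ s) (deriv γ s))
              = Real.sqrt s * (scalarCurv (G s) (γ s))
              + Real.sqrt s * (qf (G s (γ s)) (deriv γ s) (deriv γ s)) := by ring
          have hq2 : Real.sqrt s * (qf (G s (γ s)) (deriv γ s) (deriv γ s))
              ≤ Real.sqrt s * (Real.exp (2*C*s) * X^2) :=
            mul_le_mul_of_nonneg_left hq1 (Real.sqrt_nonneg s)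
          rw [hMajdef, hsplit]
          simp only
          linarith only [hterm1, hterm2, hq2]
        have hIooae : ∀ᵐ s ∂(volume.restrict (Icc (0:ℝ) τ)), s ∈ Ioo (0:ℝ) τ := by
          have h1 : ∀ᵐ s ∂(volume.restrict (Icc (0:ℝ) τ)), s ∈ Icc (0:ℝ) τ :=
            MeasureTheory.ae_restrict_mem measurableSet_Icc
          have h2 : (Ioo (0:ℝ) τ : Set ℝ) =ᵐ[volume.restrict (Icc (0:ℝ) τ)] (Icc (0:ℝ) τ : Set ℝ) :=
            Filter.EventuallyEq.filter_mono MeasureTheory.Ioo_ae_eq_Icc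
              (MeasureTheory.ae_mono Measure.restrict_le_self)
          rw [Filter.eventuallyEq_set] at h2
          filter_upwards [h1, h2] with s hs hiff
          exact hiff.2 hs
        have hae : (fun s => Real.sqrt s * (scalarCurv (G s) (γ s)
            + qf (G s (γ s)) (deriv γ s) (deriv γ s)))
            ≤ᵐ[volume.restrict (Icc (0:ℝ) τ)] Maj := by
          filter_upwards [hIooae] with s hs
          exact hptwise s hs
        have h1 : Lenergy G γ τ ≤ ∫ s in (0:ℝ)..τ, Maj s :=
          intervalIntegral.integral_mono_ae_restrict hτ0.le hInt hMajInt hae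
        have hi1 : ∫ s in (0:ℝ)..τ, s ^ ((1:ℝ)/2) = (2/3) * τ * Real.sqrt τ := by
          rw [integral_rpow (Or.inl (by norm_num))]
          rw [Real.zero_rpow (by norm_num)]
          have h5 : τ ^ ((1:ℝ)/2 + 1) = τ * Real.sqrt τ := by
            rw [Real.rpow_add hτ0, Real.rpow_one, Real.sqrt_eq_rpow]
            ring
          rw [h5]
          ring
        have hi2 : ∫ s in (0:ℝ)..τ, s ^ (-(1:ℝ)/2) = 2 * Real.sqrt τ := by
          rw [integral_rpow (Or.inl (by norm_num))]
          rw [Real.zero_rpow (by norm_num)]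
          have h5 : τ ^ (-(1:ℝ)/2 + 1) = Real.sqrt τ := by
            rw [show -(1:ℝ)/2 + 1 = (1:ℝ)/2 by norm_num, Real.sqrt_eq_rpow]
          rw [h5]
          ring
        have h2 : ∫ s in (0:ℝ)..τ, Maj s = T1 + A * (2*Real.sqrt τ) := by
          rw [hMajdef]
          rw [intervalIntegral.integral_add
            ((intervalIntegral.intervalIntegrable_rpow' (by norm_num)).const_mul _)
            ((intervalIntegral.intervalIntegrable_rpow' (by norm_num)).const_mul _)]
          rw [intervalIntegral.integral_const_mul, intervalIntegral.integral_const_mul, hi1, hi2,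
            hT1]
        rw [h2] at h1
        exact h1
    have hFqε : A * (2*Real.sqrt τ) ≤ Fq ε := by
      have h4 : Fq ε = Real.exp (2*C*τ) * (d+2*ε)^2 / (4*K^2) * (2*Real.sqrt τ) := by
        simp only [hFq, hKdef]
      have hNle : N^2 ≤ (d+2*ε)^2 := by
        apply pow_le_pow_left₀ hN0.le hNd.le
      have h5 : Real.exp (2*C*τ) * N^2 / (4*K^2) ≤ Real.exp (2*C*τ) * (d+2*ε)^2 / (4*K^2) :=
        (div_le_div_iff_of_pos_right (by positivity)).2 (mul_le_mul_of_nonneg_left hNle (Real.exp_pos _).le)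
      rw [h4, hAdef]
      apply mul_le_mul_of_nonneg_right h5 (by positivity)
    have hbnn : 0 ≤ T1 + Fq ε := by
      have h5 : 0 ≤ A * (2*Real.sqrt τ) := by positivity
      linarith only [h5, hT1nn, hFqε]
    set SL := {E | ∃ γ0 : ℝ → Fin n → ℝ, ContDiffOn ℝ 1 γ0 (Icc 0 τ) ∧ γ0 0 = p ∧ γ0 τ = q ∧
      E = Lenergy G γ0 τ} with hSL
    have hLdist : Ldist G p q τ = sInf SL := rfl
    have hmem : Lenergy G γ τ ∈ SL := ⟨γ, hγC1, hγ0, hγτ, rfl⟩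
    by_cases hbdd : BddBelow SL
    · calc Ldist G p q τ ≤ Lenergy G γ τ := by rw [hLdist]; exact csInf_le hbdd hmem
        _ ≤ T1 + A * (2*Real.sqrt τ) := hbound0
        _ ≤ T1 + Fq ε := by linarith only [hFqε]
    · rw [hLdist, Real.sInf_of_not_bddBelow hbdd]
      exact hbnn
  have hFcont : ContinuousAt Fq 0 := by
    apply ContinuousAt.mul _ continuousAt_const
    apply ContinuousAt.div
    · fun_prop
    · fun_prop
    · have h1 : Real.sqrt (τ+0) - Real.sqrt 0 = Real.sqrt τ := by simp
      show 4*(Real.sqrt (τ+0) - Real.sqrt 0)^2 ≠ 0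
      rw [h1]
      have h2 : 0 < (Real.sqrt τ)^2 := pow_pos hsqτ 2
      exact ne_of_gt (by linarith only [h2])
  have hF0 : Fq 0 = Real.exp (2*C*τ) * d^2 / (4*τ) * (2*Real.sqrt τ) := by
    simp only [hFq]
    rw [add_zero, Real.sqrt_zero, sub_zero, Real.sq_sqrt hτ0.le]
    norm_num
  have hlim : Tendsto (fun ε => T1 + Fq ε) (nhdsWithin 0 (Ioi 0)) (nhds (T1 + Fq 0)) :=
    (continuousAt_const.add hFcont).continuousWithinAt
  have hL : Ldist G p q τ ≤ T1 + Fq 0 := by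
    refine ge_of_tendsto hlim ?_
    filter_upwards [self_mem_nhdsWithin] with ε hε
    exact key ε hε
  rw [redDist, div_le_iff₀ (by positivity : (0:ℝ) < 2 * Real.sqrt τ)]
  rw [hF0] at hL
  calc Ldist G p q τ ≤ T1 + Real.exp (2*C*τ) * d^2 / (4*τ) * (2*Real.sqrt τ) := hL
    _ = (Real.exp (2 * C * τ) * d ^ 2 / (4 * τ) + (↑n * C / 3) * τ) * (2 * Real.sqrt τ) := by
        rw [hT1]; ring

end
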